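/- arXiv:2508.06315 — 7 statements merged into one kernel-verified Lean document; each statement's English description precedes it below -/
import Mathlib

section
/- The right-zero condition implies the left-zero condition: if z : {1,…,L} → {0,1,2} satisfies that every x with z(x)=0 admits x' > x with z(x')=2 and z(y)=1 for all x < y < x', then for every x with z(x)=0, either z(y)=1 for all y < x, or there exists x'' < x with z(x'')=2 and z(y)=1 for all x'' < y < x. -/
theorem right_zero_implies_left_zero {L : ℕ} (z : Fin L → Fin 3)
    (hz : ∀ x, z x = 0 → ∃ x', x < x' ∧ z x' = 2 ∧ ∀ y, x < y → y < x' → z y = 1) :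
    ∀ x, z x = 0 →
      (∀ y, y < x → z y = 1) ∨
      (∃ x'', x'' < x ∧ z x'' = 2 ∧ ∀ y, x'' < y → y < x → z y = 1) := by
  intro x hx
  set S : Finset (Fin L) := Finset.univ.filter (fun y => y < x ∧ z y ≠ 1) with hS
  by_cases hne : S.Nonempty
  · right
    set m := S.max' hne with hm
    have hmS : m ∈ S := S.max'_mem hne
    simp only [hS, Finset.mem_filter] at hmS
    have hmax : ∀ y, m < y → y < x → z y = 1 := by
      intro y hmy hyx
      by_contra hne1
      have : y ∈ S := by simp [hS, hyx, hne1]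
      exact absurd (S.le_max' y this) (not_le.mpr hmy)
    have hzm : z m = 2 := by
      have hm1 : z m ≠ 1 := hmS.2.2
      have : z m = 0 ∨ z m = 1 ∨ z m = 2 := by omega
      rcases this with h0 | h1 | h2
      · obtain ⟨x', hmx', hx'2, hmid⟩ := hz m h0
        rcases lt_trichotomy x' x with h | h | h
        · exact absurd (hmax x' hmx' h) (by rw [hx'2]; decide)
        · rw [h] at hx'2; rw [hx] at hx'2; exact absurd hx'2 (by decide)
        · exact absurd (hmid x hmS.2.1 h) (by rw [hx]; decide)
      · exact absurd h1 hm1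
      · exact h2
    exact ⟨m, hmS.2.1, hzm, hmax⟩
  · left
    intro y hyx
    by_contra h
    exact hne ⟨y, by simp [hS, hyx, h]⟩
end

section
/- For a recurrent configuration z : {1,…,L} → {0,1,2}, all suffix sums of z−1 are nonnegative: for every x ∈ {1,…,L}, Σ_{y=x}^{L} (z(y) − 1) ≥ 0. -/
def Recurrent {L : ℕ} (z : Fin L → Fin 3) : Prop :=
  ∀ x, z x = 0 → ∃ x', x < x' ∧ z x' = 2 ∧ ∀ y, x < y → y < x' → z y = 1

def heightFn {L : ℕ} (z : Fin L → Fin 3) (x : Fin L) : ℤ :=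
  ∑ y ∈ Finset.univ.filter (fun y => x ≤ y), ((z y : ℤ) - 1)

/-- ℕ-indexed suffix sum. -/
def hE {L : ℕ} (z : Fin L → Fin 3) (m : ℕ) : ℤ :=
  ∑ y ∈ Finset.univ.filter (fun y : Fin L => m ≤ y.val), ((z y : ℤ) - 1)

lemma hE_top {L : ℕ} (z : Fin L → Fin 3) (m : ℕ) (h : L ≤ m) : hE z m = 0 := by
  unfold hE
  rw [Finset.filter_false_of_mem, Finset.sum_empty]
  intro y _
  omega

lemma hE_step {L : ℕ} (z : Fin L → Fin 3) (m : ℕ) (h : m < L) :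
    hE z m = ((z ⟨m, h⟩ : ℤ) - 1) + hE z (m + 1) := by
  unfold hE
  have hset : (Finset.univ.filter (fun y : Fin L => m ≤ y.val)) =
      insert ⟨m, h⟩ (Finset.univ.filter (fun y : Fin L => m + 1 ≤ y.val)) := by
    ext y
    simp only [Finset.mem_filter, Finset.mem_univ, true_and, Finset.mem_insert]
    constructor
    · intro hy
      rcases Nat.eq_or_lt_of_le hy with h1 | h1
      · left; exact Fin.ext h1.symm
      · right; omega
    · rintro (rfl | hy)
      · exact le_refl _
      · omega
  rw [hset, Finset.sum_insert (by simp)]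

lemma hE_nonneg {L : ℕ} (z : Fin L → Fin 3) (hz : Recurrent z) :
    ∀ k m, L ≤ m + k → 0 ≤ hE z m := by
  intro k
  induction k with
  | zero => intro m hm; rw [hE_top z m (by omega)]
  | succ k ih =>
    intro m hm
    by_cases hmL : L ≤ m
    · rw [hE_top z m hmL]
    · push_neg at hmL
      rw [hE_step z m hmL]
      have h3 : z ⟨m, hmL⟩ = 0 ∨ z ⟨m, hmL⟩ = 1 ∨ z ⟨m, hmL⟩ = 2 := by
        have := (z ⟨m, hmL⟩).isLt
        simp only [Fin.ext_iff]
        omega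
      rcases h3 with h0 | h1 | h2
      · -- z m = 0 : use recurrence
        obtain ⟨x', hlt, hx'2, hmid⟩ := hz ⟨m, hmL⟩ h0
        have hx'L : x'.val < L := x'.isLt
        have hmx' : m < x'.val := hlt
        -- hE j = hE x' for m < j ≤ x'
        have key : ∀ d j, m < j → j + d = x'.val → hE z j = hE z x'.val := by
          intro d
          induction d with
          | zero => intro j _ hj; rw [Nat.add_zero] at hj; subst hj; rfl
          | succ d ihd =>
            intro j hj hjd
            have hjL : j < L := by omega
            have hz1 : z ⟨j, hjL⟩ = 1 := hmid ⟨j, hjL⟩ (by exact hj) (by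
              show j < x'.val; omega)
            rw [hE_step z j hjL, hz1]
            have := ihd (j + 1) (by omega) (by omega)
            rw [this]
            norm_num
        have h1x' : hE z (m + 1) = hE z x'.val :=
          key (x'.val - (m + 1)) (m + 1) (by omega) (by omega)
        have hx'step : hE z x'.val = ((z x' : ℤ) - 1) + hE z (x'.val + 1) := by
          have := hE_step z x'.val x'.isLt
          simpa using this
        have htail : 0 ≤ hE z (x'.val + 1) := ih (x'.val + 1) (by omega)
        rw [h0, h1x', hx'step, hx'2]
        norm_num
        linarith
      · have := ih (m + 1) (by omega)
        rw [h1]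
        norm_num
        linarith
      · have := ih (m + 1) (by omega)
        rw [h2]
        norm_num
        linarith

lemma heightFn_eq_hE {L : ℕ} (z : Fin L → Fin 3) (x : Fin L) :
    heightFn z x = hE z x.val := by
  unfold heightFn hE
  apply Finset.sum_congr _ (fun _ _ => rfl)
  apply Finset.filter_congr
  intro y _
  exact Fin.le_def

theorem suffix_sums_nonneg {L : ℕ} (z : Fin L → Fin 3) (hz : Recurrent z) :
    ∀ x : Fin L, 0 ≤ heightFn z x := by
  intro x
  rw [heightFn_eq_hE]
  exact hE_nonneg z hz (L - x.val) x.val (by omega)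
end

section
/- For a recurrent configuration z : {1,…,L} → {0,1,2}, in every suffix the number of 2's is at least the number of 0's: for every x ∈ {1,…,L}, |{y ∈ {x,…,L} : z(y)=2}| ≥ |{y ∈ {x,…,L} : z(y)=0}|. -/
/-! Send each `0` to the `2` that closes the run of `1`s following it. This map stays inside the
suffix and is injective, so the suffix has at least as many `2`s as `0`s. -/

lemma injOn_partner_of_ones_between {α : Type*} [LinearOrder α] {z : α → Fin 3} {p : α → α}
    (hlt : ∀ x, z x = 0 → x < p x) (hones : ∀ x, z x = 0 → ∀ y, x < y → y < p x → z y = 1) :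
    Set.InjOn p {x | z x = 0} := by
  -- a later `0` with the same partner would lie inside the run of `1`s of the earlier one
  have key : ∀ x₁ x₂, z x₁ = 0 → z x₂ = 0 → p x₁ = p x₂ → ¬ x₁ < x₂ := fun x₁ x₂ h₁ h₂ heq h => by
    have := hones x₁ h₁ x₂ h (heq ▸ hlt x₂ h₂)
    simp [h₂] at this
  intro x₁ h₁ x₂ h₂ heq
  rcases lt_trichotomy x₁ x₂ with h | h | h
  · exact absurd h (key x₁ x₂ h₁ h₂ heq)
  · exact h
  · exact absurd h (key x₂ x₁ h₂ h₁ heq.symm)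

theorem suffix_twos_ge_zeros {L : ℕ} (z : Fin L → Fin 3) (hz : Recurrent z) :
    ∀ x : Fin L,
      (Finset.univ.filter (fun y : Fin L => x ≤ y ∧ z y = 0)).card ≤
      (Finset.univ.filter (fun y : Fin L => x ≤ y ∧ z y = 2)).card := by
  intro x
  have : Nonempty (Fin L) := ⟨x⟩
  choose! p hlt htwo hones using hz
  refine Finset.card_le_card_of_injOn p (fun y hy => ?_) ?_
  · simp only [Finset.coe_filter, Finset.mem_univ, true_and, Set.mem_ofPred_eq] at hy ⊢
    exact ⟨hy.1.trans (hlt y hy.2).le, htwo y hy.2⟩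
  · exact (injOn_partner_of_ones_between hlt hones).mono fun y hy => by simp_all
end

section
/- The number N_L of recurrent configurations satisfies the recurrence N_{L+2} = 3·N_{L+1} − N_L for all L ≥ 1. -/
noncomputable def NRec (L : ℕ) : ℕ := Nat.card {z : Fin L → Fin 3 // Recurrent z}

def Pstart {L : ℕ} (z : Fin L → Fin 3) : Prop :=
  ∃ k, z k = 2 ∧ ∀ j, j < k → z j = 1

noncomputable def BRec (L : ℕ) : ℕ :=
  Nat.card {z : Fin L → Fin 3 // Recurrent z ∧ Pstart z}

lemma cons_recurrent {L : ℕ} (a : Fin 3) (t : Fin L → Fin 3) :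
    Recurrent (Fin.cons a t) ↔ Recurrent t ∧ (a = 0 → Pstart t) := by
  constructor
  · intro h
    constructor
    · intro x hx
      obtain ⟨x', hlt, h2, h1⟩ := h x.succ (by simpa using hx)
      refine Fin.cases ?_ ?_ x' hlt h2 h1
      · intro hlt _ _; exact absurd hlt (by simp [Fin.lt_iff_val_lt_val])
      · intro j hlt h2 h1
        refine ⟨j, by simpa [Fin.succ_lt_succ_iff] using hlt, by simpa using h2, ?_⟩
        intro y hy1 hy2
        have := h1 y.succ (by simpa [Fin.succ_lt_succ_iff] using hy1)
          (by simpa [Fin.succ_lt_succ_iff] using hy2)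
        simpa using this
    · intro ha
      obtain ⟨x', hlt, h2, h1⟩ := h 0 (by simpa using ha)
      refine Fin.cases ?_ ?_ x' hlt h2 h1
      · intro hlt _ _; exact absurd hlt (lt_irrefl _)
      · intro j _ h2 h1
        refine ⟨j, by simpa using h2, ?_⟩
        intro i hi
        have := h1 i.succ (Fin.succ_pos i) (by simpa [Fin.succ_lt_succ_iff] using hi)
        simpa using this
  · rintro ⟨ht, ha⟩ x
    refine Fin.cases ?_ ?_ x
    · intro h0
      obtain ⟨k, hk2, hk1⟩ := ha (by simpa using h0)
      refine ⟨k.succ, Fin.succ_pos k, by simpa using hk2, ?_⟩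
      intro y hy1 hy2
      refine Fin.cases ?_ ?_ y hy1 hy2
      · intro hy1 _; exact absurd hy1 (lt_irrefl _)
      · intro j _ hy2
        have := hk1 j (by simpa [Fin.succ_lt_succ_iff] using hy2)
        simpa using this
    · intro j hj
      obtain ⟨j', hlt, h2, h1⟩ := ht j (by simpa using hj)
      refine ⟨j'.succ, by simpa [Fin.succ_lt_succ_iff] using hlt, by simpa using h2, ?_⟩
      intro y hy1 hy2
      refine Fin.cases ?_ ?_ y hy1 hy2
      · intro hy1 _
        exact absurd hy1 (by simp [Fin.lt_iff_val_lt_val])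
      · intro i hy1 hy2
        have := h1 i (by simpa [Fin.succ_lt_succ_iff] using hy1)
          (by simpa [Fin.succ_lt_succ_iff] using hy2)
        simpa using this

lemma cons_pstart {L : ℕ} (a : Fin 3) (t : Fin L → Fin 3) :
    Pstart (Fin.cons a t) ↔ a = 2 ∨ (a = 1 ∧ Pstart t) := by
  constructor
  · rintro ⟨k, hk2, hk1⟩
    refine Fin.cases ?_ ?_ k hk2 hk1
    · intro hk2 _; left; simpa using hk2
    · intro m hk2 hk1
      right
      refine ⟨by simpa using hk1 0 (Fin.succ_pos m), m, by simpa using hk2, ?_⟩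
      intro j hj
      have := hk1 j.succ (by simpa [Fin.succ_lt_succ_iff] using hj)
      simpa using this
  · rintro (ha | ⟨ha, k, hk2, hk1⟩)
    · exact ⟨0, by simpa using ha, fun j hj => absurd hj (by simp [Fin.lt_iff_val_lt_val])⟩
    · refine ⟨k.succ, by simpa using hk2, ?_⟩
      intro j hj
      refine Fin.cases ?_ ?_ j hj
      · intro _; simpa using ha
      · intro i hi
        have := hk1 i (by simpa [Fin.succ_lt_succ_iff] using hi)
        simpa using this

lemma card_cons_split {L : ℕ} (Q : (Fin (L + 1) → Fin 3) → Prop) :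
    Nat.card {z : Fin (L + 1) → Fin 3 // Q z} =
      ∑ a : Fin 3, Nat.card {t : Fin L → Fin 3 // Q (Fin.cons a t)} := by
  classical
  have e1 : {z : Fin (L + 1) → Fin 3 // Q z} ≃
      {p : Fin 3 × (Fin L → Fin 3) // Q (Fin.cons p.1 p.2)} :=
    ((Fin.consEquiv (fun _ => Fin 3)).subtypeEquiv (by intro p; rfl)).symm
  have e2 : {p : Fin 3 × (Fin L → Fin 3) // Q (Fin.cons p.1 p.2)} ≃
      Σ a : Fin 3, {t : Fin L → Fin 3 // Q (Fin.cons a t)} :=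
    Equiv.subtypeProdEquivSigmaSubtype (fun a t => Q (Fin.cons a t))
  rw [Nat.card_congr (e1.trans e2)]
  simp [Nat.card_eq_fintype_card]

lemma step_A (L : ℕ) : NRec (L + 1) = 2 * NRec L + BRec L := by
  rw [NRec, card_cons_split, Fin.sum_univ_three]
  have h0 : Nat.card {t : Fin L → Fin 3 // Recurrent (Fin.cons 0 t)} = BRec L := by
    apply Nat.card_congr
    apply Equiv.subtypeEquivRight
    intro t
    rw [cons_recurrent]
    simp
  have h1 : Nat.card {t : Fin L → Fin 3 // Recurrent (Fin.cons 1 t)} = NRec L := by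
    apply Nat.card_congr
    apply Equiv.subtypeEquivRight
    intro t
    rw [cons_recurrent]
    simp
  have h2 : Nat.card {t : Fin L → Fin 3 // Recurrent (Fin.cons 2 t)} = NRec L := by
    apply Nat.card_congr
    apply Equiv.subtypeEquivRight
    intro t
    rw [cons_recurrent]
    simp
  rw [h0, h1, h2]; ring

lemma step_B (L : ℕ) : BRec (L + 1) = NRec L + BRec L := by
  rw [BRec, card_cons_split, Fin.sum_univ_three]
  have h0 : Nat.card {t : Fin L → Fin 3 //
      Recurrent (Fin.cons 0 t) ∧ Pstart (Fin.cons 0 t)} = 0 := by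
    have : IsEmpty {t : Fin L → Fin 3 //
        Recurrent (Fin.cons 0 t) ∧ Pstart (Fin.cons 0 t)} := by
      constructor
      rintro ⟨t, _, hp⟩
      rw [cons_pstart] at hp
      simp at hp
    exact Nat.card_of_isEmpty
  have h1 : Nat.card {t : Fin L → Fin 3 //
      Recurrent (Fin.cons 1 t) ∧ Pstart (Fin.cons 1 t)} = BRec L := by
    apply Nat.card_congr
    apply Equiv.subtypeEquivRight
    intro t
    rw [cons_recurrent, cons_pstart]
    simp
  have h2 : Nat.card {t : Fin L → Fin 3 //
      Recurrent (Fin.cons 2 t) ∧ Pstart (Fin.cons 2 t)} = NRec L := by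
    apply Nat.card_congr
    apply Equiv.subtypeEquivRight
    intro t
    rw [cons_recurrent, cons_pstart]
    simp
  rw [h0, h1, h2]; ring

theorem NRec_recurrence : ∀ L : ℕ, 1 ≤ L →
    (NRec (L + 2) : ℤ) = 3 * NRec (L + 1) - NRec L := by
  intro L _
  have hA1 := step_A L
  have hA2 := step_A (L + 1)
  have hB := step_B L
  have : NRec (L + 2) + NRec L = 3 * NRec (L + 1) := by
    rw [hA2, hB, hA1]; ring
  have h2 : (NRec (L + 2) : ℤ) + NRec L = 3 * NRec (L + 1) := by exact_mod_cast this
  linarith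
end

section
/- The number N_L of recurrent configurations on L sites equals the Fibonacci number F_{2L+1} (with F_1 = F_2 = 1). -/
/-- starts with 1^* 2 -/
def Sp {L : ℕ} (z : Fin L → Fin 3) : Prop :=
  ∃ x', z x' = 2 ∧ ∀ y, y < x' → z y = 1

noncomputable def Acnt (L : ℕ) : ℕ := Nat.card {z : Fin L → Fin 3 // Recurrent z ∧ Sp z}
noncomputable def Bcnt (L : ℕ) : ℕ := Nat.card {z : Fin L → Fin 3 // Recurrent z ∧ ¬ Sp z}

lemma rec_cons {L : ℕ} (c : Fin 3) (t : Fin L → Fin 3) :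
    Recurrent (Fin.cons c t) ↔ Recurrent t ∧ (c = 0 → Sp t) := by
  constructor
  · intro h
    constructor
    · intro i hi
      obtain ⟨x', hlt, h2, h1⟩ := h i.succ (by simpa using hi)
      obtain ⟨j, rfl⟩ := Fin.exists_succ_eq.mpr (Fin.pos_iff_ne_zero.mp (lt_of_le_of_lt i.succ.zero_le hlt))
      refine ⟨j, Fin.succ_lt_succ_iff.mp hlt, by simpa using h2, fun y hy1 hy2 => ?_⟩
      have := h1 y.succ (Fin.succ_lt_succ_iff.mpr hy1) (Fin.succ_lt_succ_iff.mpr hy2)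
      simpa using this
    · intro hc
      obtain ⟨x', hlt, h2, h1⟩ := h 0 (by simpa using hc)
      obtain ⟨j, rfl⟩ := Fin.exists_succ_eq.mpr (Fin.pos_iff_ne_zero.mp hlt)
      refine ⟨j, by simpa using h2, fun y hy => ?_⟩
      have := h1 y.succ (Fin.succ_pos y) (Fin.succ_lt_succ_iff.mpr hy)
      simpa using this
  · rintro ⟨ht, hc⟩ x hx
    revert hx
    refine Fin.cases ?_ ?_ x
    · intro hx
      obtain ⟨j, h2, h1⟩ := hc (by simpa using hx)
      refine ⟨j.succ, Fin.succ_pos j, by simpa using h2, fun y hy1 hy2 => ?_⟩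
      obtain ⟨y', rfl⟩ := Fin.exists_succ_eq.mpr (Fin.pos_iff_ne_zero.mp hy1)
      simpa using h1 y' (Fin.succ_lt_succ_iff.mp hy2)
    · intro i hx
      obtain ⟨j, hlt, h2, h1⟩ := ht i (by simpa using hx)
      refine ⟨j.succ, Fin.succ_lt_succ_iff.mpr hlt, by simpa using h2, fun y hy1 hy2 => ?_⟩
      obtain ⟨y', rfl⟩ := Fin.exists_succ_eq.mpr
        (Fin.pos_iff_ne_zero.mp (lt_of_le_of_lt i.succ.zero_le hy1))
      simpa using h1 y' (Fin.succ_lt_succ_iff.mp hy1) (Fin.succ_lt_succ_iff.mp hy2)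

lemma sp_cons {L : ℕ} (c : Fin 3) (t : Fin L → Fin 3) :
    Sp (Fin.cons c t) ↔ c = 2 ∨ (c = 1 ∧ Sp t) := by
  constructor
  · rintro ⟨x', h2, h1⟩
    rcases Fin.eq_zero_or_eq_succ x' with rfl | ⟨j, rfl⟩
    · exact Or.inl (by simpa using h2)
    · refine Or.inr ⟨by simpa using h1 0 (Fin.succ_pos j), j, by simpa using h2,
        fun y hy => by simpa using h1 y.succ (Fin.succ_lt_succ_iff.mpr hy)⟩
  · rintro (rfl | ⟨rfl, j, h2, h1⟩)
    · exact ⟨0, by simp, fun y hy => absurd hy (by simp)⟩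
    · refine ⟨j.succ, by simpa using h2, fun y hy => ?_⟩
      rcases Fin.eq_zero_or_eq_succ y with rfl | ⟨y', rfl⟩
      · simp
      · simpa using h1 y' (Fin.succ_lt_succ_iff.mp hy)

open Classical in
lemma card_cons (Q : ∀ {M : ℕ}, (Fin M → Fin 3) → Prop) (L : ℕ) :
    Nat.card {z : Fin (L+1) → Fin 3 // Q z}
      = Nat.card {t : Fin L → Fin 3 // Q (Fin.cons 0 t)}
        + Nat.card {t : Fin L → Fin 3 // Q (Fin.cons 1 t)}
        + Nat.card {t : Fin L → Fin 3 // Q (Fin.cons 2 t)} := by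
  have e : {z : Fin (L+1) → Fin 3 // Q z}
      ≃ Σ c : Fin 3, {t : Fin L → Fin 3 // Q (Fin.cons c t)} :=
    ((Fin.consEquiv (fun _ => Fin 3)).symm.subtypeEquiv (fun z => by
        simp [Fin.consEquiv, Fin.cons_self_tail])).trans
      (Equiv.subtypeProdEquivSigmaSubtype (fun c t => Q (Fin.cons c t)))
  rw [Nat.card_congr e, Nat.card_eq_fintype_card, Fintype.card_sigma, Fin.sum_univ_three]
  simp [Nat.card_eq_fintype_card]

open Classical in
lemma NRec_eq_add (L : ℕ) : NRec L = Acnt L + Bcnt L := by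
  rw [NRec, Acnt, Bcnt]
  rw [Nat.card_congr (Equiv.sumCompl (fun z : {z : Fin L → Fin 3 // Recurrent z} => Sp z.1)).symm,
    Nat.card_sum]
  congr 1
  · exact Nat.card_congr (Equiv.subtypeSubtypeEquivSubtypeInter Recurrent Sp)
  · exact Nat.card_congr (Equiv.subtypeSubtypeEquivSubtypeInter Recurrent (fun z => ¬ Sp z))

lemma Acnt_succ (L : ℕ) : Acnt (L+1) = NRec L + Acnt L := by
  rw [Acnt, card_cons (fun {M} z => Recurrent z ∧ Sp z) L]
  have h0 : Nat.card {t : Fin L → Fin 3 // Recurrent (Fin.cons 0 t) ∧ Sp (Fin.cons 0 t)} = 0 := by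
    rw [Nat.card_eq_zero]
    left
    refine ⟨?_⟩
    rintro ⟨t, _, hs⟩
    rw [sp_cons] at hs
    rcases hs with h | ⟨h, _⟩ <;> exact absurd h (by decide)
  have h1 : Nat.card {t : Fin L → Fin 3 // Recurrent (Fin.cons 1 t) ∧ Sp (Fin.cons 1 t)}
      = Acnt L := by
    apply Nat.card_congr (Equiv.subtypeEquivRight _)
    intro t
    rw [rec_cons, sp_cons]
    constructor
    · rintro ⟨⟨hr, _⟩, (h | ⟨_, hs⟩)⟩
      · exact absurd h (by decide)
      · exact ⟨hr, hs⟩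
    · rintro ⟨hr, hs⟩
      exact ⟨⟨hr, fun h => absurd h (by decide)⟩, Or.inr ⟨rfl, hs⟩⟩
  have h2 : Nat.card {t : Fin L → Fin 3 // Recurrent (Fin.cons 2 t) ∧ Sp (Fin.cons 2 t)}
      = NRec L := by
    apply Nat.card_congr (Equiv.subtypeEquivRight _)
    intro t
    rw [rec_cons, sp_cons]
    constructor
    · rintro ⟨⟨hr, _⟩, _⟩; exact hr
    · intro hr
      exact ⟨⟨hr, fun h => absurd h (by decide)⟩, Or.inl rfl⟩
  rw [h0, h1, h2]; omega

lemma Bcnt_succ (L : ℕ) : Bcnt (L+1) = Acnt L + Bcnt L := by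
  rw [Bcnt, card_cons (fun {M} z => Recurrent z ∧ ¬ Sp z) L]
  have h0 : Nat.card {t : Fin L → Fin 3 // Recurrent (Fin.cons 0 t) ∧ ¬ Sp (Fin.cons 0 t)}
      = Acnt L := by
    apply Nat.card_congr (Equiv.subtypeEquivRight _)
    intro t
    rw [rec_cons, sp_cons]
    constructor
    · rintro ⟨⟨hr, hc⟩, _⟩
      exact ⟨hr, hc rfl⟩
    · rintro ⟨hr, hs⟩
      refine ⟨⟨hr, fun _ => hs⟩, ?_⟩
      rintro (h | ⟨h, _⟩) <;> exact absurd h (by decide)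
  have h1 : Nat.card {t : Fin L → Fin 3 // Recurrent (Fin.cons 1 t) ∧ ¬ Sp (Fin.cons 1 t)}
      = Bcnt L := by
    apply Nat.card_congr (Equiv.subtypeEquivRight _)
    intro t
    rw [rec_cons, sp_cons]
    constructor
    · rintro ⟨⟨hr, _⟩, hs⟩
      exact ⟨hr, fun h => hs (Or.inr ⟨rfl, h⟩)⟩
    · rintro ⟨hr, hs⟩
      refine ⟨⟨hr, fun h => absurd h (by decide)⟩, ?_⟩
      rintro (h | ⟨_, h⟩)
      · exact absurd h (by decide)
      · exact hs h
  have h2 : Nat.card {t : Fin L → Fin 3 // Recurrent (Fin.cons 2 t) ∧ ¬ Sp (Fin.cons 2 t)}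
      = 0 := by
    rw [Nat.card_eq_zero]
    left
    refine ⟨?_⟩
    rintro ⟨t, _, hs⟩
    exact hs ((sp_cons 2 t).mpr (Or.inl rfl))
  rw [h0, h1, h2]; omega

lemma Acnt_zero : Acnt 0 = 0 := by
  rw [Acnt, Nat.card_eq_zero]
  left
  refine ⟨?_⟩
  rintro ⟨t, _, j, _⟩
  exact j.elim0

lemma Bcnt_zero : Bcnt 0 = 1 := by
  rw [Bcnt]
  have : Unique {z : Fin 0 → Fin 3 // Recurrent z ∧ ¬ Sp z} := by
    refine ⟨⟨⟨Fin.elim0, fun x => x.elim0, fun ⟨j, _⟩ => j.elim0⟩⟩, ?_⟩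
    rintro ⟨t, _⟩
    exact Subtype.ext (funext fun x => x.elim0)
  exact Nat.card_unique

lemma AB_fib : ∀ L : ℕ, Acnt L = Nat.fib (2 * L) ∧ Acnt L + Bcnt L = Nat.fib (2 * L + 1) := by
  intro L
  induction L with
  | zero => simp [Acnt_zero, Bcnt_zero]
  | succ n ih =>
    obtain ⟨hA, hAB⟩ := ih
    have hN : NRec n = Nat.fib (2 * n + 1) := by rw [NRec_eq_add]; exact hAB
    have h1 : Acnt (n+1) = Nat.fib (2 * (n+1)) := by
      rw [Acnt_succ, hN, hA, show 2 * (n+1) = 2*n+2 by ring, Nat.fib_add_two]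
      omega
    refine ⟨h1, ?_⟩
    have h2 : Bcnt (n+1) = Nat.fib (2*n+1) := by
      rw [Bcnt_succ]
      omega
    have h3 : Nat.fib (2*(n+1)+1) = Nat.fib (2*n+1) + Nat.fib (2*n+2) := by
      rw [show 2*(n+1)+1 = 2*n+1+2 by ring, Nat.fib_add_two]
    rw [h1, h2, h3, show 2 * (n+1) = 2*n+2 by ring]
    omega

theorem NRec_eq_fib : ∀ L : ℕ, 1 ≤ L → NRec L = Nat.fib (2 * L + 1) := by
  intro L _
  rw [NRec_eq_add]
  exact (AB_fib L).2
end

section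
/- The exponential growth rate of the number of recurrent configurations is (3+√5)/2: the sequence N_L^{1/L} converges to (3+√5)/2 as L → ∞. -/
open Filter Topology Real goldenRatio

lemma Nat.card_subtype_fin_succ {α : Type*} [Fintype α] {L : ℕ}
    (P : (Fin (L + 1) → α) → Prop) :
    Nat.card {z // P z} = ∑ c, Nat.card {z : Fin L → α // P (Fin.cons c z)} := by
  rw [← Nat.card_sigma]
  exact Nat.card_congr (((Fin.consEquiv fun _ => α).subtypeEquiv fun _ => Iff.rfl).symm.trans
    (Equiv.subtypeProdEquivSigmaSubtype fun c z => P (Fin.cons c z)))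

def OnesThenTwo {L : ℕ} (z : Fin L → Fin 3) : Prop :=
  ∃ x, z x = 2 ∧ ∀ y, y < x → z y = 1

lemma onesThenTwo_cons {L : ℕ} (c : Fin 3) (z : Fin L → Fin 3) :
    OnesThenTwo (Fin.cons c z) ↔ c = 2 ∨ c = 1 ∧ OnesThenTwo z := by
  simp [OnesThenTwo, Fin.exists_fin_succ, Fin.forall_fin_succ, Fin.succ_lt_succ_iff,
    ← exists_and_left, and_left_comm]

lemma recurrent_cons {L : ℕ} (c : Fin 3) (z : Fin L → Fin 3) :
    Recurrent (Fin.cons c z) ↔ (c = 0 → OnesThenTwo z) ∧ Recurrent z := by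
  simp [Recurrent, OnesThenTwo, Fin.exists_fin_succ, Fin.forall_fin_succ, Fin.succ_lt_succ_iff]

noncomputable def NRecOnesThenTwo (L : ℕ) : ℕ :=
  Nat.card {z : Fin L → Fin 3 // Recurrent z ∧ OnesThenTwo z}

lemma NRec_zero : NRec 0 = 1 := by
  simp [NRec, Recurrent]

lemma NRecOnesThenTwo_zero : NRecOnesThenTwo 0 = 0 := by
  simp [NRecOnesThenTwo, OnesThenTwo]

lemma NRec_succ (L : ℕ) : NRec (L + 1) = NRecOnesThenTwo L + NRec L + NRec L := by
  simp [NRec, NRecOnesThenTwo, Nat.card_subtype_fin_succ, Fin.sum_univ_three, recurrent_cons,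
    and_comm]

lemma NRecOnesThenTwo_succ (L : ℕ) : NRecOnesThenTwo (L + 1) = NRecOnesThenTwo L + NRec L := by
  simp [NRec, NRecOnesThenTwo, Nat.card_subtype_fin_succ, Fin.sum_univ_three, recurrent_cons,
    onesThenTwo_cons, and_comm]

lemma NRec_eq_fib_and_NRecOnesThenTwo_eq_fib (L : ℕ) :
    NRec L = Nat.fib (2 * L + 1) ∧ NRecOnesThenTwo L = Nat.fib (2 * L) := by
  induction L with
  | zero => simp [NRec_zero, NRecOnesThenTwo_zero]
  | succ L ih =>
    have hfib_even : Nat.fib (2 * L + 2) = Nat.fib (2 * L) + Nat.fib (2 * L + 1) :=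
      Nat.fib_add_two
    have hfib_odd : Nat.fib (2 * L + 3) = Nat.fib (2 * L + 1) + Nat.fib (2 * L + 2) :=
      Nat.fib_add_two
    rw [NRec_succ, NRecOnesThenTwo_succ, ih.1, ih.2, show 2 * (L + 1) = 2 * L + 2 by ring,
      show 2 * L + 2 + 1 = 2 * L + 3 by ring]
    omega

lemma fib_succ_le_goldenRatio_pow (n : ℕ) : (Nat.fib (n + 1) : ℝ) ≤ φ ^ n := by
  have h := goldenRatio_mul_fib_succ_add_fib n
  rw [pow_succ'] at h
  exact le_of_mul_le_mul_left (by linarith [(Nat.fib n).cast_nonneg (α := ℝ)]) goldenRatio_pos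

lemma goldenRatio_pow_le_mul_fib_succ (n : ℕ) : φ ^ n ≤ φ * Nat.fib (n + 1) := by
  have h := goldenRatio_mul_fib_succ_add_fib n
  have hmono : (Nat.fib n : ℝ) ≤ Nat.fib (n + 1) := by exact_mod_cast Nat.fib_le_fib_succ
  refine le_of_mul_le_mul_left ?_ goldenRatio_pos
  rw [← pow_succ', ← h, ← mul_assoc, ← sq, goldenRatio_sq]
  linarith

lemma goldenRatio_sq_eq : φ ^ 2 = (3 + √5) / 2 := by
  rw [goldenRatio_sq, goldenRatio]
  ring

lemma mul_pow_rpow_one_div {c r : ℝ} (hc : 0 ≤ c) (hr : 0 ≤ r) {n : ℕ} (hn : n ≠ 0) :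
    (c * r ^ n) ^ (1 / (n : ℝ)) = c ^ (1 / (n : ℝ)) * r := by
  rw [mul_rpow hc (by positivity), one_div, pow_rpow_inv_natCast hr hn]

lemma tendsto_rpow_one_div_of_geometric_bounds {u : ℕ → ℝ} {c C r : ℝ}
    (hc : 0 < c) (hC : 0 < C) (hr : 0 ≤ r)
    (hlow : ∀ᶠ n in atTop, c * r ^ n ≤ u n) (hup : ∀ᶠ n in atTop, u n ≤ C * r ^ n) :
    Tendsto (fun n : ℕ => u n ^ (1 / (n : ℝ))) atTop (𝓝 r) := by
  have hroot {a : ℝ} (ha : 0 < a) :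
      Tendsto (fun n : ℕ => (a * r ^ n) ^ (1 / (n : ℝ))) atTop (𝓝 r) := by
    have hlim : Tendsto (fun n : ℕ => a ^ (1 / (n : ℝ)) * r) atTop (𝓝 (a ^ (0 : ℝ) * r)) :=
      ((continuousAt_const_rpow ha.ne').tendsto.comp
        tendsto_one_div_atTop_nhds_zero_nat).mul_const r
    rw [rpow_zero, one_mul] at hlim
    refine hlim.congr' ?_
    filter_upwards [eventually_ne_atTop 0] with n hn
    exact (mul_pow_rpow_one_div ha.le hr hn).symm
  refine tendsto_of_tendsto_of_tendsto_of_le_of_le' (hroot hc) (hroot hC) ?_ ?_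
  · filter_upwards [hlow] with n hn
    exact rpow_le_rpow (by positivity) hn (by positivity)
  · filter_upwards [hlow, hup] with n hlo hn
    exact rpow_le_rpow (hlo.trans' (by positivity)) hn (by positivity)

theorem NRec_growth_rate :
    Filter.Tendsto (fun L : ℕ => (NRec L : ℝ) ^ (1 / (L : ℝ)))
      Filter.atTop (nhds ((3 + Real.sqrt 5) / 2)) := by
  have hfib (L : ℕ) : (NRec L : ℝ) = Nat.fib (2 * L + 1) := by
    exact_mod_cast (NRec_eq_fib_and_NRecOnesThenTwo_eq_fib L).1
  rw [← goldenRatio_sq_eq]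
  refine tendsto_rpow_one_div_of_geometric_bounds (c := φ⁻¹) (C := 1)
    (inv_pos.2 goldenRatio_pos) one_pos (by positivity)
    (Eventually.of_forall fun L => ?_) (Eventually.of_forall fun L => ?_)
  · rw [hfib, ← pow_mul, inv_mul_le_iff₀ goldenRatio_pos]
    exact goldenRatio_pow_le_mul_fib_succ _
  · rw [hfib, one_mul, ← pow_mul]
    exact fib_succ_le_goldenRatio_pow _
end

section
/- The ratio of recurrent configurations to all configurations tends to zero: N_L / 3^L → 0 as L → ∞. -/
lemma rec_no_double_zero {L : ℕ} {z : Fin L → Fin 3} (hz : Recurrent z)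
    {i : ℕ} (h : i + 1 < L) (h0 : z ⟨i, by omega⟩ = 0) : z ⟨i + 1, h⟩ ≠ 0 := by
  obtain ⟨x', hlt, h2, hmid⟩ := hz ⟨i, by omega⟩ h0
  have hlt' : i < x'.val := hlt
  rcases eq_or_lt_of_le (show i + 1 ≤ x'.val from hlt') with heq | hlt2
  · have hx : x' = ⟨i + 1, h⟩ := Fin.ext heq.symm
    rw [← hx, h2]; decide
  · have := hmid ⟨i + 1, h⟩ (by simp [Fin.lt_def]) (by simp [Fin.lt_def]; omega)
    rw [this]; decide

lemma nrec_le (L : ℕ) : NRec L ≤ 3 * 8 ^ (L / 2) := by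
  classical
  set T := (Fin (L / 2) → {p : Fin 3 × Fin 3 // p ≠ (0, 0)}) × Fin 3
  have hf : ∃ f : {z : Fin L → Fin 3 // Recurrent z} → T, Function.Injective f := by
    refine ⟨fun z => (fun k =>
      ⟨(z.1 ⟨2 * k.1, by have := k.2; omega⟩, z.1 ⟨2 * k.1 + 1, by have := k.2; omega⟩), ?_⟩,
      if h : 2 * (L / 2) < L then z.1 ⟨2 * (L / 2), h⟩ else 0), ?_⟩
    · intro hc
      have h1 : z.1 ⟨2 * k.1, by have := k.2; omega⟩ = 0 := congrArg Prod.fst hc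
      have h2 : z.1 ⟨2 * k.1 + 1, by have := k.2; omega⟩ = 0 := congrArg Prod.snd hc
      exact rec_no_double_zero z.2 (by have := k.2; omega) h1 h2
    · intro z w h
      have hfst := congrArg Prod.fst h
      have hsnd := congrArg Prod.snd h
      simp only at hfst hsnd
      apply Subtype.ext
      funext x
      rcases Nat.lt_or_ge x.val (2 * (L / 2)) with hx | hx
      · have hk : x.val / 2 < L / 2 := by omega
        have h1 := congrFun hfst ⟨x.val / 2, hk⟩
        have h2 := Subtype.ext_iff.mp h1
        simp only at h2
        have h3 := congrArg Prod.fst h2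
        have h4 := congrArg Prod.snd h2
        simp only at h3 h4
        rcases (show x.val = 2 * (x.val / 2) ∨ x.val = 2 * (x.val / 2) + 1 by omega) with he | he
        · have hxe : x = ⟨2 * (x.val / 2), by omega⟩ := Fin.ext he
          rw [hxe]; exact h3
        · have hxe : x = ⟨2 * (x.val / 2) + 1, by omega⟩ := Fin.ext he
          rw [hxe]; exact h4
      · have hxv : x.val = 2 * (L / 2) := by have := x.2; omega
        have hlt : 2 * (L / 2) < L := by have := x.2; omega
        rw [dif_pos hlt, dif_pos hlt] at hsnd
        have hxe : x = ⟨2 * (L / 2), hlt⟩ := Fin.ext hxv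
        rw [hxe]; exact hsnd
  obtain ⟨f, hfinj⟩ := hf
  have hle : NRec L ≤ Nat.card T := Nat.card_le_card_of_injective f hfinj
  have hT : Nat.card T = 3 * 8 ^ (L / 2) := by
    have h8 : Fintype.card {p : Fin 3 × Fin 3 // p ≠ (0, 0)} = 8 := by decide
    simp [T, Nat.card_eq_fintype_card, Fintype.card_prod, Fintype.card_fun, h8, Nat.mul_comm]
  omega

theorem NRec_ratio_tendsto_zero :
    Filter.Tendsto (fun L : ℕ => (NRec L : ℝ) / 3 ^ L)
      Filter.atTop (nhds 0) := by
  have hbound : ∀ L : ℕ, (NRec L : ℝ) / 3 ^ L ≤ 3 * (8 / 9) ^ (L / 2) := by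
    intro L
    have h1 : (NRec L : ℝ) ≤ 3 * 8 ^ (L / 2) := by exact_mod_cast nrec_le L
    have h3 : (0 : ℝ) < 3 ^ L := by positivity
    rw [div_le_iff₀ h3]
    have h9 : (9 : ℝ) ^ (L / 2) ≤ 3 ^ L := by
      calc (9 : ℝ) ^ (L / 2) = 3 ^ (2 * (L / 2)) := by
            rw [pow_mul]; norm_num
        _ ≤ 3 ^ L := pow_le_pow_right₀ (by norm_num) (by omega)
    calc (NRec L : ℝ) ≤ 3 * 8 ^ (L / 2) := h1
      _ = 3 * ((8 / 9) ^ (L / 2) * 9 ^ (L / 2)) := by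
          rw [← mul_pow]; norm_num
      _ ≤ 3 * ((8 / 9) ^ (L / 2) * 3 ^ L) := by
          have hp : (0 : ℝ) ≤ (8 / 9 : ℝ) ^ (L / 2) := by positivity
          nlinarith
      _ = 3 * (8 / 9) ^ (L / 2) * 3 ^ L := by ring
  have hnn : ∀ L : ℕ, 0 ≤ (NRec L : ℝ) / 3 ^ L := fun L => by positivity
  refine squeeze_zero hnn hbound ?_
  have hdiv : Filter.Tendsto (fun L : ℕ => L / 2) Filter.atTop Filter.atTop :=
    Filter.tendsto_atTop_atTop.mpr fun b => ⟨2 * b, fun a ha => by omega⟩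
  have hpow : Filter.Tendsto (fun n : ℕ => ((8 : ℝ) / 9) ^ n) Filter.atTop (nhds 0) :=
    tendsto_pow_atTop_nhds_zero_of_lt_one (by norm_num) (by norm_num)
  have := (hpow.comp hdiv).const_mul (3 : ℝ)
  simpa using this
end
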